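/- For every base SL-FL formula α, store s, and heaplets h and h': if S = Supp(α, s, h) ≠ ⊥ and h' agrees with h on S, then Supp(α, s, h') = S. -/
import Mathlib


/-!
# Base SL-FL (determined-heaplet separation logic)

Locations `Loc` with a distinguished `nil`, field names `F`, variables `Var`.
A heaplet is a domain `dom ⊆ Loc \ {nil}` together with, for each field, a function
defined on the domain (extended by `nil` outside the domain, so that heaplets with the
same domain and the same field values on the domain are equal).
-/

namespace SLFL

open scoped Classical

/-- A heaplet: a domain of locations (not containing `nil`) together with a value for
each field at each location of the domain.  Outside the domain the maps are required to
take the junk value `nil`, so that heaplets are determined by their domain and their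
field values on the domain. -/
structure Heaplet (Loc F : Type) (nil : Loc) where
  dom : Set Loc
  map : F → Loc → Loc
  nil_not_mem : nil ∉ dom
  map_outside : ∀ f l, l ∉ dom → map f l = nil

variable {Loc F Var : Type} {nil : Loc}

/-- The restriction `h↾S`: the heaplet with domain `S ∩ dom h` and fields restricted
accordingly. -/
noncomputable def Heaplet.restrict (h : Heaplet Loc F nil) (S : Set Loc) :
    Heaplet Loc F nil where
  dom := S ∩ h.dom
  map := fun f l => if l ∈ S ∩ h.dom then h.map f l else nil
  nil_not_mem := fun hc => h.nil_not_mem hc.2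
  map_outside := fun f l hl => by simp [hl]

/-- `Agrees h' h S`: the heaplet `h'` agrees with `h` on the set `S`. -/
def Agrees (h' h : Heaplet Loc F nil) (S : Set Loc) : Prop :=
  S ⊆ h.dom ∧ S ⊆ h'.dom ∧ ∀ f : F, ∀ u ∈ S, h'.map f u = h.map f u

/-- `Subheaplet h' h`: `h'` is a subheaplet of `h`. -/
def Subheaplet (h' h : Heaplet Loc F nil) : Prop :=
  h'.dom ⊆ h.dom ∧ Agrees h h' h'.dom

/-- Formulas of the base SL-FL logic: heap-independent formulas, points-to atoms,
guarded existentials `∃y.(x ↦_f y : α)`, conditionals, conjunction, overlapping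
conjunction `∧∧`, disjunction, and separating conjunction `⋆`. -/
inductive Fml (Var F Loc : Type) : Type _ where
  | pure (δ : (Var → Loc) → Prop)
  | pointsTo (x : Var) (f : F) (y : Var)
  | exGuard (y x : Var) (f : F) (α : Fml Var F Loc)
  | ite (γ α β : Fml Var F Loc)
  | and (α β : Fml Var F Loc)
  | oand (α β : Fml Var F Loc)
  | or (α β : Fml Var F Loc)
  | star (α β : Fml Var F Loc)

/-- Union of two partial sets of locations (`none` plays the role of `⊥`). -/
def union2 : Option (Set Loc) → Option (Set Loc) → Option (Set Loc)
  | some a, some b => some (a ∪ b)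
  | _, _ => none

mutual
/-- The partial support `Supp(α, s, h)`; `none` is `⊥`. -/
noncomputable def Supp : Fml Var F Loc → (Var → Loc) → Heaplet Loc F nil → Option (Set Loc)
  | .pure _, _, _ => some (∅ : Set Loc)
  | .pointsTo x _ _, s, h => if s x ∈ h.dom then some {s x} else none
  | .exGuard y x f α, s, h =>
      if s x ∈ h.dom then
        match Supp α (Function.update s y (h.map f (s x))) h with
        | some S => some ({s x} ∪ S)
        | none => none
      else none
  | .ite γ α β, s, h =>
      match Supp γ s h with
      | none => none
      | some Sγ =>
        if Sat γ s (h.restrict Sγ) then (Supp α s h).map fun Sα => Sγ ∪ Sα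
        else (Supp β s h).map fun Sβ => Sγ ∪ Sβ
  | .and α β, s, h => union2 (Supp α s h) (Supp β s h)
  | .oand α β, s, h => union2 (Supp α s h) (Supp β s h)
  | .or α β, s, h => union2 (Supp α s h) (Supp β s h)
  | .star α β, s, h => union2 (Supp α s h) (Supp β s h)

/-- Satisfaction `(s, h) ⊨ α`. -/
noncomputable def Sat : Fml Var F Loc → (Var → Loc) → Heaplet Loc F nil → Prop
  | .pure δ, s, h => δ s ∧ h.dom = ∅
  | .pointsTo x f y, s, h => h.dom = {s x} ∧ h.map f (s x) = s y
  | .exGuard y x f α, s, h =>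
      s x ∈ h.dom ∧
        ∃ S, Supp α (Function.update s y (h.map f (s x))) h = some S ∧
          h.dom = {s x} ∪ S ∧
          Sat α (Function.update s y (h.map f (s x))) (h.restrict S)
  | .ite γ α β, s, h =>
      ∃ Sγ, Supp γ s h = some Sγ ∧
        ((Sat γ s (h.restrict Sγ) ∧
            ∃ Sα, Supp α s h = some Sα ∧ h.dom = Sγ ∪ Sα ∧ Sat α s (h.restrict Sα)) ∨
         (¬ Sat γ s (h.restrict Sγ) ∧
            ∃ Sβ, Supp β s h = some Sβ ∧ h.dom = Sγ ∪ Sβ ∧ Sat β s (h.restrict Sβ)))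
  | .and α β, s, h => Sat α s h ∧ Sat β s h
  | .oand α β, s, h =>
      ∃ Sα Sβ, Supp α s h = some Sα ∧ Supp β s h = some Sβ ∧
        h.dom = Sα ∪ Sβ ∧ Sat α s (h.restrict Sα) ∧ Sat β s (h.restrict Sβ)
  | .or α β, s, h =>
      ∃ Sα Sβ, Supp α s h = some Sα ∧ Supp β s h = some Sβ ∧
        h.dom = Sα ∪ Sβ ∧ (Sat α s (h.restrict Sα) ∨ Sat β s (h.restrict Sβ))
  | .star α β, s, h =>
      ∃ h₁ h₂ : Heaplet Loc F nil, Subheaplet h₁ h ∧ Subheaplet h₂ h ∧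
        Disjoint h₁.dom h₂.dom ∧ h.dom = h₁.dom ∪ h₂.dom ∧ Sat α s h₁ ∧ Sat β s h₂
end

end SLFL


namespace SLFL
variable {Loc F Var : Type} {nil : Loc}

theorem supp_subset_dom :
    ∀ (α : Fml Var F Loc) (s : Var → Loc) (h : Heaplet Loc F nil) (S : Set Loc),
      Supp (nil := nil) α s h = some S → S ⊆ h.dom := by
  intro α
  induction α with
  | pure δ =>
      intro s h S hS
      simp only [Supp] at hS
      cases hS; simp
  | pointsTo x f y =>
      intro s h S hS
      simp only [Supp] at hS
      split at hS
      · cases hS; simpa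
      · exact absurd hS (by simp)
  | exGuard y x f α ih =>
      intro s h S hS
      simp only [Supp] at hS
      split at hS
      · rename_i hx
        split at hS
        · rename_i S' hS'
          cases hS
          exact Set.union_subset (by simpa) (ih _ _ _ hS')
        · exact absurd hS (by simp)
      · exact absurd hS (by simp)
  | ite γ α β ihγ ihα ihβ =>
      intro s h S hS
      simp only [Supp] at hS
      split at hS
      · exact absurd hS (by simp)
      · rename_i Sγ hγ
        split at hS
        · rcases hα : Supp (nil := nil) α s h with _ | Sα <;> rw [hα] at hS
          · exact absurd hS (by simp)
          · simp only [Option.map_some, Option.some.injEq] at hS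
            cases hS
            exact Set.union_subset (ihγ _ _ _ hγ) (ihα _ _ _ hα)
        · rcases hβ : Supp (nil := nil) β s h with _ | Sβ <;> rw [hβ] at hS
          · exact absurd hS (by simp)
          · simp only [Option.map_some, Option.some.injEq] at hS
            cases hS
            exact Set.union_subset (ihγ _ _ _ hγ) (ihβ _ _ _ hβ)
  | and α β ihα ihβ =>
      intro s h S hS
      simp only [Supp] at hS
      rcases hα : Supp (nil := nil) α s h with _ | Sα <;>
        rcases hβ : Supp (nil := nil) β s h with _ | Sβ <;>
          rw [hα, hβ] at hS <;> simp [union2] at hS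
      cases hS
      exact Set.union_subset (ihα _ _ _ hα) (ihβ _ _ _ hβ)
  | oand α β ihα ihβ =>
      intro s h S hS
      simp only [Supp] at hS
      rcases hα : Supp (nil := nil) α s h with _ | Sα <;>
        rcases hβ : Supp (nil := nil) β s h with _ | Sβ <;>
          rw [hα, hβ] at hS <;> simp [union2] at hS
      cases hS
      exact Set.union_subset (ihα _ _ _ hα) (ihβ _ _ _ hβ)
  | or α β ihα ihβ =>
      intro s h S hS
      simp only [Supp] at hS
      rcases hα : Supp (nil := nil) α s h with _ | Sα <;>
        rcases hβ : Supp (nil := nil) β s h with _ | Sβ <;>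
          rw [hα, hβ] at hS <;> simp [union2] at hS
      cases hS
      exact Set.union_subset (ihα _ _ _ hα) (ihβ _ _ _ hβ)
  | star α β ihα ihβ =>
      intro s h S hS
      simp only [Supp] at hS
      rcases hα : Supp (nil := nil) α s h with _ | Sα <;>
        rcases hβ : Supp (nil := nil) β s h with _ | Sβ <;>
          rw [hα, hβ] at hS <;> simp [union2] at hS
      cases hS
      exact Set.union_subset (ihα _ _ _ hα) (ihβ _ _ _ hβ)

theorem restrict_eq_of_agrees {h h' : Heaplet Loc F nil} {S T : Set Loc}
    (hag : Agrees h' h S) (hTh : T ⊆ h.dom) (hT : T ⊆ S) :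
    h'.restrict T = h.restrict T := by
  obtain ⟨h1, h2, h3⟩ := hag
  have hdom : T ∩ h'.dom = T ∩ h.dom := by
    rw [Set.inter_eq_left.mpr (hT.trans h2), Set.inter_eq_left.mpr hTh]
  cases h' with
  | mk d' m' n' o' =>
    cases h with
    | mk d m n o =>
      simp only [Heaplet.restrict, Heaplet.mk.injEq]
      constructor
      · exact hdom
      · funext f l
        by_cases hl : l ∈ T ∩ d
        · rw [if_pos hl, if_pos (hdom ▸ hl)]
          exact h3 f l (hT hl.1)
        · rw [if_neg hl, if_neg (fun hc => hl (hdom ▸ hc))]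

end SLFL
open SLFL in
/-- For every base SL-FL formula `α`, store `s`, and heaplets `h`, `h'`:
if `S = Supp(α, s, h) ≠ ⊥` and `h'` agrees with `h` on `S`, then `Supp(α, s, h') = S`. -/
theorem supp_agrees {Loc F Var : Type} {nil : Loc}
    (α : Fml Var F Loc) (s : Var → Loc) (h h' : Heaplet Loc F nil) (S : Set Loc)
    (hS : Supp (nil := nil) α s h = some S) (hagree : Agrees h' h S) :
    Supp (nil := nil) α s h' = some S := by
  classical
  induction α generalizing s S with
  | pure δ =>
      simp only [Supp] at hS ⊢; exact hS
  | pointsTo x f y =>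
      simp only [Supp] at hS ⊢
      split at hS
      · cases hS
        rw [if_pos (hagree.2.1 rfl)]
      · exact absurd hS (by simp)
  | exGuard y x f α ih =>
      simp only [Supp] at hS ⊢
      split at hS
      · rename_i hx
        rcases hS' : Supp (nil := nil) α (Function.update s y (h.map f (s x))) h
            with _ | S' <;> rw [hS'] at hS
        · exact absurd hS (by simp)
        · cases hS
          have hxS : s x ∈ ({s x} ∪ S' : Set Loc) := Or.inl rfl
          have hmap : h'.map f (s x) = h.map f (s x) := hagree.2.2 f (s x) hxS
          have hag' : Agrees h' h S' :=
            ⟨fun u hu => hagree.1 (Or.inr hu), fun u hu => hagree.2.1 (Or.inr hu),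
             fun g u hu => hagree.2.2 g u (Or.inr hu)⟩
          rw [if_pos (hagree.2.1 hxS), hmap, ih _ _ hS' hag']
      · exact absurd hS (by simp)
  | ite γ α β ihγ ihα ihβ =>
      simp only [Supp] at hS
      split at hS
      · exact absurd hS (by simp)
      · rename_i Sγ hγ
        split at hS
        · rename_i hsat
          rcases hα : Supp (nil := nil) α s h with _ | Sα <;> rw [hα] at hS
          · exact absurd hS (by simp)
          · simp only [Option.map_some, Option.some.injEq] at hS
            subst hS
            have hγsub : Sγ ⊆ h.dom := supp_subset_dom γ s h Sγ hγ
            have hγ' := ihγ _ _ hγ ⟨fun u hu => hagree.1 (Or.inl hu),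
              fun u hu => hagree.2.1 (Or.inl hu), fun g u hu => hagree.2.2 g u (Or.inl hu)⟩
            have hα' := ihα _ _ hα ⟨fun u hu => hagree.1 (Or.inr hu),
              fun u hu => hagree.2.1 (Or.inr hu), fun g u hu => hagree.2.2 g u (Or.inr hu)⟩
            simp only [Supp, hγ', hα', Option.map_some]
            rw [restrict_eq_of_agrees hagree hγsub Set.subset_union_left, if_pos hsat]
        · rename_i hsat
          rcases hβ : Supp (nil := nil) β s h with _ | Sβ <;> rw [hβ] at hS
          · exact absurd hS (by simp)
          · simp only [Option.map_some, Option.some.injEq] at hS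
            subst hS
            have hγsub : Sγ ⊆ h.dom := supp_subset_dom γ s h Sγ hγ
            have hγ' := ihγ _ _ hγ ⟨fun u hu => hagree.1 (Or.inl hu),
              fun u hu => hagree.2.1 (Or.inl hu), fun g u hu => hagree.2.2 g u (Or.inl hu)⟩
            have hβ' := ihβ _ _ hβ ⟨fun u hu => hagree.1 (Or.inr hu),
              fun u hu => hagree.2.1 (Or.inr hu), fun g u hu => hagree.2.2 g u (Or.inr hu)⟩
            simp only [Supp, hγ', hβ', Option.map_some]
            rw [restrict_eq_of_agrees hagree hγsub Set.subset_union_left, if_neg hsat]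
  | and α β ihα ihβ =>
      simp only [Supp] at hS ⊢
      rcases hα : Supp (nil := nil) α s h with _ | Sα <;>
        rcases hβ : Supp (nil := nil) β s h with _ | Sβ <;>
          rw [hα, hβ] at hS <;> simp [union2] at hS
      subst hS
      rw [ihα _ _ hα ⟨fun u hu => hagree.1 (Or.inl hu),
        fun u hu => hagree.2.1 (Or.inl hu), fun g u hu => hagree.2.2 g u (Or.inl hu)⟩,
        ihβ _ _ hβ ⟨fun u hu => hagree.1 (Or.inr hu),
        fun u hu => hagree.2.1 (Or.inr hu), fun g u hu => hagree.2.2 g u (Or.inr hu)⟩]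
      rfl
  | oand α β ihα ihβ =>
      simp only [Supp] at hS ⊢
      rcases hα : Supp (nil := nil) α s h with _ | Sα <;>
        rcases hβ : Supp (nil := nil) β s h with _ | Sβ <;>
          rw [hα, hβ] at hS <;> simp [union2] at hS
      subst hS
      rw [ihα _ _ hα ⟨fun u hu => hagree.1 (Or.inl hu),
        fun u hu => hagree.2.1 (Or.inl hu), fun g u hu => hagree.2.2 g u (Or.inl hu)⟩,
        ihβ _ _ hβ ⟨fun u hu => hagree.1 (Or.inr hu),
        fun u hu => hagree.2.1 (Or.inr hu), fun g u hu => hagree.2.2 g u (Or.inr hu)⟩]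
      rfl
  | or α β ihα ihβ =>
      simp only [Supp] at hS ⊢
      rcases hα : Supp (nil := nil) α s h with _ | Sα <;>
        rcases hβ : Supp (nil := nil) β s h with _ | Sβ <;>
          rw [hα, hβ] at hS <;> simp [union2] at hS
      subst hS
      rw [ihα _ _ hα ⟨fun u hu => hagree.1 (Or.inl hu),
        fun u hu => hagree.2.1 (Or.inl hu), fun g u hu => hagree.2.2 g u (Or.inl hu)⟩,
        ihβ _ _ hβ ⟨fun u hu => hagree.1 (Or.inr hu),
        fun u hu => hagree.2.1 (Or.inr hu), fun g u hu => hagree.2.2 g u (Or.inr hu)⟩]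
      rfl
  | star α β ihα ihβ =>
      simp only [Supp] at hS ⊢
      rcases hα : Supp (nil := nil) α s h with _ | Sα <;>
        rcases hβ : Supp (nil := nil) β s h with _ | Sβ <;>
          rw [hα, hβ] at hS <;> simp [union2] at hS
      subst hS
      rw [ihα _ _ hα ⟨fun u hu => hagree.1 (Or.inl hu),
        fun u hu => hagree.2.1 (Or.inl hu), fun g u hu => hagree.2.2 g u (Or.inl hu)⟩,
        ihβ _ _ hβ ⟨fun u hu => hagree.1 (Or.inr hu),
        fun u hu => hagree.2.1 (Or.inr hu), fun g u hu => hagree.2.2 g u (Or.inr hu)⟩]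
      rfl
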